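/- arXiv:2501.10689 — 3 statements merged into one kernel-verified Lean document; each statement's English description precedes it below -/
import Mathlib

section
/- Let A be an M × N complex matrix with rows a₁ᴴ, …, a_Mᴴ, all nonzero, let b ∈ ℂ^M, and let x* ∈ ℂ^N satisfy A x* = b. Let x ∈ ℂ^N be such that x − x* lies in the range of Aᴴ, and let r ∈ ℂ^M with r_i = b_i − a_iᴴ x; assume r ≠ 0. Suppose σ > 0 satisfies ‖A y‖₂ ≥ σ‖y‖₂ for every y in the range of Aᴴ. For each i define the single-row Kaczmarz update x⁽ⁱ⁾ = x + (r_i/‖a_i‖₂²)·a_i. Then the expected squared error of the greedy random Kaczmarz step satisfies Σ_{i=1}^{M} (|r_i|²/‖r‖₂²)·‖x⁽ⁱ⁾ − x*‖₂² ≤ (1 − σ²/‖A‖_F²)·‖x − x*‖₂². -/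
open scoped BigOperators

noncomputable section

/-- Hermitian inner product aᴴb = ∑ conj(aₙ)·bₙ on complex vectors. -/
def hIP {ι : Type*} [Fintype ι] (a y : ι → ℂ) : ℂ := ∑ n, (starRingEnd ℂ) (a n) * y n

/-- Squared Euclidean norm of a complex vector. -/
def sqNorm {ι : Type*} [Fintype ι] (a : ι → ℂ) : ℝ := ∑ n, Complex.normSq (a n)

lemma sqNorm_nonneg {ι : Type*} [Fintype ι] (a : ι → ℂ) : 0 ≤ sqNorm a :=
  Finset.sum_nonneg fun _ _ => Complex.normSq_nonneg _

lemma sqNorm_pos {ι : Type*} [Fintype ι] {a : ι → ℂ} (h : a ≠ 0) : 0 < sqNorm a := by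
  rcases (sqNorm_nonneg a).lt_or_eq with h' | h'
  · exact h'
  · exfalso; apply h; funext n
    have := (Finset.sum_eq_zero_iff_of_nonneg
      (fun i _ => Complex.normSq_nonneg (a i))).mp h'.symm n (Finset.mem_univ n)
    simpa using Complex.normSq_eq_zero.mp this

lemma sqNorm_add_smul {ι : Type*} [Fintype ι] (e av : ι → ℂ) (c : ℂ) :
    sqNorm (e + c • av) = sqNorm e + Complex.normSq c * sqNorm av
      + 2 * ((starRingEnd ℂ) c * hIP av e).re := by
  unfold sqNorm hIP
  simp only [Pi.add_apply, Pi.smul_apply, smul_eq_mul, Complex.normSq_add,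
    Complex.normSq_mul]
  rw [Finset.sum_add_distrib, Finset.sum_add_distrib, ← Finset.mul_sum]
  congr 1
  calc ∑ n, 2 * (e n * (starRingEnd ℂ) (c * av n)).re
      = ∑ n, 2 * ((starRingEnd ℂ) c * ((starRingEnd ℂ) (av n) * e n)).re := by
        apply Finset.sum_congr rfl
        intro n _
        congr 1
        simp only [map_mul]
        ring
    _ = 2 * (∑ n, (starRingEnd ℂ) c * ((starRingEnd ℂ) (av n) * e n)).re := by
        rw [Complex.re_sum, Finset.mul_sum]
    _ = 2 * ((starRingEnd ℂ) c * ∑ n, (starRingEnd ℂ) (av n) * e n).re := by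
        rw [Finset.mul_sum]

/-- One-step expected contraction of the greedy random Kaczmarz step (Theorem 3 of the
paper).  The matrix A has rows aᵢᴴ, so Range(Aᴴ) = span{aᵢ}, (Ay)ᵢ = aᵢᴴy and
‖A‖_F² = ∑ᵢ ‖aᵢ‖₂². -/
theorem grk_expected_contraction (M N : ℕ) (hM : 0 < M)
    (a : Fin M → Fin N → ℂ) (ha : ∀ i, a i ≠ 0)
    (b : Fin M → ℂ)
    (xstar : Fin N → ℂ) (hxs : ∀ i, hIP (a i) xstar = b i)
    (x : Fin N → ℂ)
    (hrange : x - xstar ∈ Submodule.span ℂ (Set.range a))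
    (r : Fin M → ℂ) (hr : ∀ i, r i = b i - hIP (a i) x) (hr0 : r ≠ 0)
    (σ : ℝ) (hσ : 0 < σ)
    (hmin : ∀ y : Fin N → ℂ, y ∈ Submodule.span ℂ (Set.range a) →
      σ * Real.sqrt (sqNorm y) ≤ Real.sqrt (sqNorm (fun i => hIP (a i) y)))
    (x' : Fin M → Fin N → ℂ)
    (hx' : ∀ i, x' i = x + (r i / (sqNorm (a i) : ℂ)) • a i) :
    ∑ i, (Complex.normSq (r i) / sqNorm r) * sqNorm (x' i - xstar)
      ≤ (1 - σ ^ 2 / (∑ i, sqNorm (a i))) * sqNorm (x - xstar) := by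
  set E := sqNorm (x - xstar) with hE
  set R := sqNorm r with hR
  set F := ∑ i, sqNorm (a i) with hF
  have hRpos : 0 < R := sqNorm_pos hr0
  have hapos : ∀ i, 0 < sqNorm (a i) := fun i => sqNorm_pos (ha i)
  have hFpos : 0 < F := by
    rw [hF]
    exact Finset.sum_pos (fun i _ => hapos i) ⟨⟨0, hM⟩, Finset.mem_univ _⟩
  -- hIP (a i) (x - xstar) = - r i
  have hre : ∀ i, hIP (a i) (x - xstar) = - r i := by
    intro i
    have : hIP (a i) (x - xstar) = hIP (a i) x - hIP (a i) xstar := by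
      unfold hIP
      rw [← Finset.sum_sub_distrib]
      apply Finset.sum_congr rfl
      intro n _
      simp [Pi.sub_apply]; ring
    rw [this, hxs i, hr i]; ring
  -- error of each update
  have key : ∀ i, sqNorm (x' i - xstar) = E - Complex.normSq (r i) / sqNorm (a i) := by
    intro i
    set s := sqNorm (a i) with hs
    have hs0 : s ≠ 0 := (hapos i).ne'
    have heq : x' i - xstar = (x - xstar) + (r i / (s : ℂ)) • a i := by
      funext n
      simp [hx' i, Pi.add_apply, Pi.sub_apply, Pi.smul_apply]
      ring
    rw [heq, sqNorm_add_smul, hre i, ← hE, ← hs]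
    have h1 : Complex.normSq (r i / (s : ℂ)) = Complex.normSq (r i) / s ^ 2 := by
      rw [Complex.normSq_div, Complex.normSq_ofReal]; ring
    have h2 : ((starRingEnd ℂ) (r i / (s : ℂ)) * (- r i)).re
        = - (Complex.normSq (r i) / s) := by
      rw [map_div₀, Complex.conj_ofReal]
      have : (starRingEnd ℂ) (r i) / (s : ℂ) * (- r i)
          = -((Complex.normSq (r i) : ℂ) / (s : ℂ)) := by
        rw [Complex.normSq_eq_conj_mul_self]
        ring
      rw [this]
      simp [Complex.div_re, Complex.normSq_ofReal]
      field_simp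
    rw [h1, h2]
    field_simp
    ring_nf
  -- the expected error
  set S := ∑ i, Complex.normSq (r i) ^ 2 / sqNorm (a i) with hS
  have hsum : ∑ i, (Complex.normSq (r i) / R) * sqNorm (x' i - xstar)
      = E - S / R := by
    have hRsum : ∑ i, Complex.normSq (r i) = R := rfl
    calc ∑ i, (Complex.normSq (r i) / R) * sqNorm (x' i - xstar)
        = ∑ i, ((Complex.normSq (r i) * E
            - Complex.normSq (r i) ^ 2 / sqNorm (a i)) / R) := by
          apply Finset.sum_congr rfl
          intro i _
          rw [key i]
          field_simp
      _ = (∑ i, (Complex.normSq (r i) * E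
            - Complex.normSq (r i) ^ 2 / sqNorm (a i))) / R := by
          rw [Finset.sum_div]
      _ = ((∑ i, Complex.normSq (r i)) * E - S) / R := by
          rw [Finset.sum_sub_distrib, Finset.sum_mul, hS]
      _ = E - S / R := by
          rw [hRsum]
          field_simp
  -- Cauchy–Schwarz (Sedrakyan): R^2 / F ≤ S
  have hCS : R ^ 2 / F ≤ S := by
    have := Finset.sq_sum_div_le_sum_sq_div Finset.univ
      (fun i => Complex.normSq (r i)) (g := fun i => sqNorm (a i))
      (fun i _ => hapos i)
    exact this
  -- σ² E ≤ R
  have hsigma : σ ^ 2 * E ≤ R := by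
    have h1 := hmin (x - xstar) hrange
    have h2 : sqNorm (fun i => hIP (a i) (x - xstar)) = R := by
      rw [hR]
      unfold sqNorm
      apply Finset.sum_congr rfl
      intro i _
      simp only [hre i, Complex.normSq_neg]
    rw [h2] at h1
    have h3 : (σ * Real.sqrt E) ^ 2 ≤ Real.sqrt R ^ 2 := by
      apply pow_le_pow_left₀ (by positivity) h1
    rwa [mul_pow, Real.sq_sqrt (sqNorm_nonneg _), Real.sq_sqrt hRpos.le] at h3
  -- conclude
  rw [hsum]
  have hEnn : 0 ≤ E := sqNorm_nonneg _
  have step1 : σ ^ 2 / F * E ≤ S / R := by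
    have h1 : σ ^ 2 / F * E = σ ^ 2 * E / F := by ring
    have h2 : σ ^ 2 * E / F ≤ R / F := by
      apply div_le_div_of_nonneg_right hsigma hFpos.le
    have h3 : R / F ≤ S / R := by
      rw [div_le_div_iff₀ hFpos hRpos, ← sq]
      calc R ^ 2 = R ^ 2 / F * F := by field_simp
        _ ≤ S * F := by
          exact mul_le_mul_of_nonneg_right hCS hFpos.le
    calc σ ^ 2 / F * E = σ ^ 2 * E / F := h1
      _ ≤ R / F := h2
      _ ≤ S / R := h3
  nlinarith [step1]
end
end

section
/- Let F be a finite index set and let {a_j}_{j∈F} be pairwise orthogonal nonzero vectors in ℂ^N (a_jᴴ a_i = 0 for i ≠ j in F), let {b_j}_{j∈F} ⊆ ℂ, and let x ∈ ℂ^N. For each j ∈ F set r_j = b_j − a_jᴴ x and φ_j = r_j/‖a_j‖₂², and assume not all r_j are zero. Let d = Σ_{j∈F} φ_j·a_j and c = Σ_{j∈F} conj(φ_j)·r_j, and define the aggregation-hyperplane update x' = x + (c/‖d‖₂²)·d. Then a_jᴴ x' = b_j for every j ∈ F; i.e., one aggregation step solves all equations indexed by F simultaneously. -/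
open scoped BigOperators

noncomputable section

/-!
Orthogonality gives `a_jᴴ d = φ_j ‖a_j‖² = r_j`, hence `c = Σ conj(φ_j) a_jᴴ d = dᴴ d = ‖d‖²`.
The step is therefore `x' = x + d` (or `x' = x` when `d = 0`, in which case every `r_j`
vanishes), and `a_jᴴ x' = a_jᴴ x + r_j = b_j`.
-/

open scoped InnerProductSpace

section
variable {𝕜 E ι : Type*} [RCLike 𝕜] [NormedAddCommGroup E] [InnerProductSpace 𝕜 E] [Fintype ι]

theorem inner_sum_smul_of_pairwise_orthogonal {v : ι → E}
    (hv : Pairwise fun i j => ⟪v i, v j⟫_𝕜 = 0) (φ : ι → 𝕜) (j : ι) :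
    ⟪v j, ∑ i, φ i • v i⟫_𝕜 = φ j * (‖v j‖ : 𝕜) ^ 2 := by
  rw [inner_sum, Finset.sum_eq_single_of_mem j (Finset.mem_univ j), inner_smul_right,
    inner_self_eq_norm_sq_to_K]
  intro i _ hij
  rw [inner_smul_right, hv hij.symm, mul_zero]

-- For `d = 0` the division is `0 / 0 = 0` and both sides reduce to `⟪u, x⟫`.
theorem inner_add_inner_self_div_smul (u x d : E) :
    ⟪u, x + (⟪d, d⟫_𝕜 / (‖d‖ : 𝕜) ^ 2) • d⟫_𝕜 = ⟪u, x⟫_𝕜 + ⟪u, d⟫_𝕜 := by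
  rcases eq_or_ne d 0 with rfl | hd
  · simp
  · rw [inner_self_eq_norm_sq_to_K, div_self (by simpa using hd), one_smul, inner_add_right]

end

theorem hIP_eq_inner {ι : Type*} [Fintype ι] (u y : ι → ℂ) :
    hIP u y = ⟪WithLp.toLp 2 u, WithLp.toLp 2 y⟫_ℂ := by
  simp [hIP, PiLp.inner_apply, mul_comm]

theorem sqNorm_eq_norm_sq {ι : Type*} [Fintype ι] (u : ι → ℂ) :
    sqNorm u = ‖WithLp.toLp 2 u‖ ^ 2 := by
  simp [sqNorm, EuclideanSpace.norm_sq_eq, Complex.normSq_eq_norm_sq]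

theorem ahk_orthogonal_solves_all_general (N : ℕ) (ι : Type) [Fintype ι]
    (a : ι → Fin N → ℂ) (ha : ∀ j, a j ≠ 0)
    (horth : ∀ i j : ι, i ≠ j → hIP (a j) (a i) = 0)
    (b : ι → ℂ) (x : Fin N → ℂ)
    (r φ : ι → ℂ)
    (hr : ∀ j, r j = b j - hIP (a j) x)
    (hφ : ∀ j, φ j = r j / (sqNorm (a j) : ℂ))
    (d : Fin N → ℂ) (hd : d = ∑ j, φ j • a j)
    (c : ℂ) (hc : c = ∑ j, (starRingEnd ℂ) (φ j) * r j)
    (x' : Fin N → ℂ) (hx' : x' = x + (c / (sqNorm d : ℂ)) • d) :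
    ∀ j : ι, hIP (a j) x' = b j := by
  set v : ι → EuclideanSpace ℂ (Fin N) := fun j => WithLp.toLp 2 (a j)
  have hd' : WithLp.toLp 2 d = ∑ j, φ j • v j := by simp [hd, v]
  have hv : Pairwise fun i j => ⟪v i, v j⟫_ℂ = 0 := fun i j hij => by
    simpa [hIP_eq_inner] using horth j i hij.symm
  have hrd : ∀ j, r j = ⟪v j, WithLp.toLp 2 d⟫_ℂ := fun j => by
    rw [hd', inner_sum_smul_of_pairwise_orthogonal hv, hφ, sqNorm_eq_norm_sq]
    push_cast
    exact (div_mul_cancel₀ _ (by simp [ha j])).symm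
  have hcd : c = ⟪WithLp.toLp 2 d, WithLp.toLp 2 d⟫_ℂ := by
    simp_rw [hc, hrd, ← inner_smul_left, ← sum_inner, ← hd']
  intro j
  calc hIP (a j) x' = ⟪v j, WithLp.toLp 2 x⟫_ℂ + ⟪v j, WithLp.toLp 2 d⟫_ℂ := by
        rw [hIP_eq_inner, hx', WithLp.toLp_add, WithLp.toLp_smul, hcd, sqNorm_eq_norm_sq,
          Complex.ofReal_pow]
        exact inner_add_inner_self_div_smul _ _ _
    _ = b j := by rw [← hrd, ← hIP_eq_inner, hr, add_sub_cancel]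

/-- Theorem 4 of the paper: one aggregation-hyperplane Kaczmarz step over a pairwise
orthogonal family F solves all equations indexed by F simultaneously. -/
theorem ahk_orthogonal_solves_all (N : ℕ) (ι : Type) [Fintype ι]
    (a : ι → Fin N → ℂ) (ha : ∀ j, a j ≠ 0)
    (horth : ∀ i j : ι, i ≠ j → hIP (a j) (a i) = 0)
    (b : ι → ℂ) (x : Fin N → ℂ)
    (r φ : ι → ℂ)
    (hr : ∀ j, r j = b j - hIP (a j) x)
    (hφ : ∀ j, φ j = r j / (sqNorm (a j) : ℂ))
    (hr0 : ∃ j, r j ≠ 0)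
    (d : Fin N → ℂ) (hd : d = ∑ j, φ j • a j)
    (c : ℂ) (hc : c = ∑ j, (starRingEnd ℂ) (φ j) * r j)
    (x' : Fin N → ℂ) (hx' : x' = x + (c / (sqNorm d : ℂ)) • d) :
    ∀ j : ι, hIP (a j) x' = b j :=
  ahk_orthogonal_solves_all_general N ι a ha horth b x r φ hr hφ d hd c hc x' hx'
end
end

section
/- Let F be a finite index set and let {a_j}_{j∈F} be pairwise orthogonal nonzero vectors in ℂ^N (a_jᴴ a_i = 0 for i ≠ j in F), let {b_j}_{j∈F} ⊆ ℂ, and let x ∈ ℂ^N. For each j ∈ F set r_j = b_j − a_jᴴ x and φ_j = r_j/‖a_j‖₂², and assume not all r_j are zero. Let d = Σ_{j∈F} φ_j·a_j and c = Σ_{j∈F} conj(φ_j)·r_j, and define x' = x + (c/‖d‖₂²)·d. Then x' = x + Σ_{j∈F} φ_j·a_j; i.e., the aggregation step reduces to a sum of independent single-row Kaczmarz corrections that can be computed in parallel. -/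
/-!
Pythagoras for the orthogonal family `(a j)` gives `‖d‖² = ∑ |φ j|² ‖a j‖²`, and since
`φ j ‖a j‖² = r j` this is exactly `c`. Hence the step length `c / ‖d‖²` is `1`,
unless `‖d‖² = 0`, in which case `d = 0` and both sides equal `x`.
-/

open scoped BigOperators

noncomputable section

section HermitianForm

variable {κ ι : Type*} [Fintype κ] [Fintype ι]

lemma hIP_eq_star_dotProduct (v w : ι → ℂ) : hIP v w = star v ⬝ᵥ w := rfl

lemma sqNorm_eq_hIP (v : ι → ℂ) : (sqNorm v : ℂ) = hIP v v := by
  simp [sqNorm, hIP, Complex.normSq_eq_conj_mul_self]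

lemma sqNorm_eq_zero_iff {v : ι → ℂ} : sqNorm v = 0 ↔ v = 0 := by
  simp [sqNorm, Finset.sum_eq_zero_iff_of_nonneg, Complex.normSq_nonneg, funext_iff]

lemma ofReal_sqNorm_ne_zero {v : ι → ℂ} (hv : v ≠ 0) : (sqNorm v : ℂ) ≠ 0 :=
  Complex.ofReal_ne_zero.mpr (mt sqNorm_eq_zero_iff.mp hv)

lemma hIP_sum_smul (c e : κ → ℂ) (v : κ → ι → ℂ) :
    hIP (∑ j, c j • v j) (∑ i, e i • v i) =
      ∑ j, ∑ i, (starRingEnd ℂ) (c j) * e i * hIP (v j) (v i) := by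
  simp only [hIP_eq_star_dotProduct, star_sum, star_smul, sum_dotProduct, dotProduct_sum,
    smul_dotProduct, dotProduct_smul, smul_eq_mul, Finset.mul_sum]
  rw [Finset.sum_comm]
  exact Finset.sum_congr rfl fun j _ => Finset.sum_congr rfl fun i _ => by
    simp only [Complex.star_def]; ring

lemma sqNorm_sum_smul_of_orthogonal (c : κ → ℂ) {v : κ → ι → ℂ}
    (horth : ∀ i j, i ≠ j → hIP (v j) (v i) = 0) :
    (sqNorm (∑ j, c j • v j) : ℂ) = ∑ j, (starRingEnd ℂ) (c j) * c j * sqNorm (v j) := by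
  rw [sqNorm_eq_hIP, hIP_sum_smul]
  refine Finset.sum_congr rfl fun j _ => ?_
  rw [Finset.sum_eq_single_of_mem j (Finset.mem_univ j) fun i _ hij => by simp [horth i j hij],
    sqNorm_eq_hIP]

lemma div_sqNorm_self_smul (v : ι → ℂ) : ((sqNorm v : ℂ) / sqNorm v) • v = v := by
  by_cases hv : v = 0
  · simp [hv]
  · rw [div_self (ofReal_sqNorm_ne_zero hv), one_smul]

end HermitianForm

theorem ahk_orthogonal_parallel_form_general (N : ℕ) (ι : Type) [Fintype ι]
    (a : ι → Fin N → ℂ) (ha : ∀ j, a j ≠ 0)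
    (horth : ∀ i j : ι, i ≠ j → hIP (a j) (a i) = 0)
    (x : Fin N → ℂ)
    (r φ : ι → ℂ)
    (hφ : ∀ j, φ j = r j / (sqNorm (a j) : ℂ))
    (d : Fin N → ℂ) (hd : d = ∑ j, φ j • a j)
    (c : ℂ) (hc : c = ∑ j, (starRingEnd ℂ) (φ j) * r j)
    (x' : Fin N → ℂ) (hx' : x' = x + (c / (sqNorm d : ℂ)) • d) :
    x' = x + ∑ j, φ j • a j := by
  have hφr : ∀ j, φ j * sqNorm (a j) = r j := fun j => by
    rw [hφ, div_mul_cancel₀ _ (ofReal_sqNorm_ne_zero (ha j))]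
  have hdc : (sqNorm d : ℂ) = c := by
    simp only [hd, hc, sqNorm_sum_smul_of_orthogonal φ horth, mul_assoc, hφr]
  rw [hx', ← hdc, div_sqNorm_self_smul, hd]

/-- Proposition 1 of the paper: on a pairwise orthogonal family, the aggregation-hyperplane
Kaczmarz step reduces to a sum of independent single-row Kaczmarz corrections. -/
theorem ahk_orthogonal_parallel_form (N : ℕ) (ι : Type) [Fintype ι]
    (a : ι → Fin N → ℂ) (ha : ∀ j, a j ≠ 0)
    (horth : ∀ i j : ι, i ≠ j → hIP (a j) (a i) = 0)
    (b : ι → ℂ) (x : Fin N → ℂ)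
    (r φ : ι → ℂ)
    (hr : ∀ j, r j = b j - hIP (a j) x)
    (hφ : ∀ j, φ j = r j / (sqNorm (a j) : ℂ))
    (hr0 : ∃ j, r j ≠ 0)
    (d : Fin N → ℂ) (hd : d = ∑ j, φ j • a j)
    (c : ℂ) (hc : c = ∑ j, (starRingEnd ℂ) (φ j) * r j)
    (x' : Fin N → ℂ) (hx' : x' = x + (c / (sqNorm d : ℂ)) • d) :
    x' = x + ∑ j, φ j • a j :=
  ahk_orthogonal_parallel_form_general N ι a ha horth x r φ hφ d hd c hc x' hx'
end
end
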